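/- arXiv:0712.2167 — 13 statements merged into one kernel-verified Lean document; each statement's English description precedes it below -/
import Mathlib

section
/- The Choi–Lam quartic q(w,x,y,z) = w^4 + x^2y^2 + y^2z^2 + z^2x^2 - 4wxyz is not a sum of squares of real quadratic forms. -/
/-!
The quartic `q` vanishes at `e₁, e₂, e₃` and at the four points `(1, ±1, ±1, ±1)` with an even
number of minus signs, so in a decomposition `q = ∑ pᵢ²` every quadratic form `pᵢ` vanishes there
too. Summing a quadratic form over these four sign points cancels every cross term and leaves
`4 (p(e₀) + p(e₁) + p(e₂) + p(e₃))`, so every `pᵢ` also vanishes at `e₀`, whereas `q(e₀) = 1`.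
-/

open MvPolynomial

noncomputable def choiLam : MvPolynomial (Fin 4) ℝ :=
  X 0 ^ 4 + X 1 ^ 2 * X 2 ^ 2 + X 2 ^ 2 * X 3 ^ 2 + X 3 ^ 2 * X 1 ^ 2 - 4 * X 0 * X 1 * X 2 * X 3

lemma eval_choiLam (v : Fin 4 → ℝ) :
    eval v choiLam = v 0 ^ 4 + v 1 ^ 2 * v 2 ^ 2 + v 2 ^ 2 * v 3 ^ 2 + v 3 ^ 2 * v 1 ^ 2
      - 4 * v 0 * v 1 * v 2 * v 3 := by
  simp [choiLam]

lemma monomial_sign_sum_eq_four_mul_unit_sum {R : Type*} [CommRing R] {a b c d : ℕ}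
    (h : a + b + c + d = 2) :
    (1 : R) ^ a * 1 ^ b * 1 ^ c * 1 ^ d + 1 ^ a * 1 ^ b * (-1) ^ c * (-1) ^ d
      + 1 ^ a * (-1) ^ b * 1 ^ c * (-1) ^ d + 1 ^ a * (-1) ^ b * (-1) ^ c * 1 ^ d
    = 4 * (1 ^ a * 0 ^ b * 0 ^ c * 0 ^ d + 0 ^ a * 1 ^ b * 0 ^ c * 0 ^ d
      + 0 ^ a * 0 ^ b * 1 ^ c * 0 ^ d + 0 ^ a * 0 ^ b * 0 ^ c * 1 ^ d) := by
  obtain ⟨ha, hb, hc, hd⟩ : a ≤ 2 ∧ b ≤ 2 ∧ c ≤ 2 ∧ d ≤ 2 := by omega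
  interval_cases a <;> interval_cases b <;> interval_cases c <;> interval_cases d <;>
    first | omega | norm_num

lemma MvPolynomial.IsHomogeneous.eval_sign_sum_eq_four_mul {R : Type*} [CommRing R]
    {p : MvPolynomial (Fin 4) R} (hp : p.IsHomogeneous 2) :
    eval ![1, 1, 1, 1] p + eval ![1, 1, -1, -1] p + eval ![1, -1, 1, -1] p
      + eval ![1, -1, -1, 1] p
    = 4 * (eval ![1, 0, 0, 0] p + eval ![0, 1, 0, 0] p + eval ![0, 0, 1, 0] p
      + eval ![0, 0, 0, 1] p) := by
  simp only [eval_eq', ← Finset.sum_add_distrib, Finset.mul_sum]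
  refine Finset.sum_congr rfl fun d hd => ?_
  have hdeg : d 0 + d 1 + d 2 + d 3 = 2 := by
    simpa [Finsupp.weight_apply, Finsupp.sum_fintype, Fin.sum_univ_four]
      using hp (mem_support_iff.mp hd)
  simp only [Fin.prod_univ_four, Matrix.cons_val_zero, Matrix.cons_val_one, Matrix.head_cons,
    Matrix.cons_val_two, Matrix.tail_cons, Matrix.cons_val_three]
  linear_combination coeff d p * monomial_sign_sum_eq_four_mul_unit_sum (R := R) hdeg

lemma eval_eq_zero_of_eval_sum_sq_eq_zero {σ ι : Type*} [Fintype ι] {p : ι → MvPolynomial σ ℝ}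
    {v : σ → ℝ} (h : eval v (∑ i, p i ^ 2) = 0) (i : ι) : eval v (p i) = 0 := by
  simp only [map_sum, map_pow] at h
  exact pow_eq_zero_iff two_ne_zero |>.mp <|
    (Finset.sum_eq_zero_iff_of_nonneg fun j _ => sq_nonneg _).mp h i (Finset.mem_univ i)

theorem choi_lam_quartic_not_sos :
    ¬ ∃ (r : ℕ) (p : Fin r → MvPolynomial (Fin 4) ℝ),
      (∀ i, (p i).IsHomogeneous 2) ∧
      (X 0 ^ 4 + X 1 ^ 2 * X 2 ^ 2 + X 2 ^ 2 * X 3 ^ 2 + X 3 ^ 2 * X 1 ^ 2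
        - 4 * X 0 * X 1 * X 2 * X 3 : MvPolynomial (Fin 4) ℝ) = ∑ i, (p i) ^ 2 := by
  rintro ⟨r, p, hp, hq⟩
  change choiLam = _ at hq
  have hzero {v : Fin 4 → ℝ} (hv : eval v choiLam = 0) (i : Fin r) : eval v (p i) = 0 :=
    eval_eq_zero_of_eval_sum_sq_eq_zero (hq ▸ hv) i
  have he0 (i : Fin r) : eval ![1, 0, 0, 0] (p i) = 0 := by
    have h := (hp i).eval_sign_sum_eq_four_mul
    rw [hzero (v := ![1, 1, 1, 1]), hzero (v := ![1, 1, -1, -1]), hzero (v := ![1, -1, 1, -1]),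
      hzero (v := ![1, -1, -1, 1]), hzero (v := ![0, 1, 0, 0]), hzero (v := ![0, 0, 1, 0]),
      hzero (v := ![0, 0, 0, 1])] at h
    · linarith
    all_goals norm_num [eval_choiLam, Matrix.cons_val_two, Matrix.cons_val_three]
  have hq_e0 := hq ▸ eval_choiLam ![1, 0, 0, 0]
  simp [he0] at hq_e0
end

section
/- The Choi–Lam sextic s(x,y,z) = x^4y^2 + y^4z^2 + z^4x^2 - 3x^2y^2z^2 is not a sum of squares of real cubic forms. -/
/-!
Suppose `s = ∑ pᵢ²` with cubic forms `pᵢ` and compare coefficients. If a monomial `m` is the only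
way to write `m²` as a product of two monomials that can occur in the `pᵢ`, then the coefficient of
`m²` in `∑ pᵢ²` is `∑ (coeff m pᵢ)²`. As `s` has no `x⁶, y⁶, z⁶` term, no `pᵢ` contains
`x³, y³, z³`; then, as `s` has no `x⁴z², x²y⁴, y²z⁴` term, no `pᵢ` contains `x²z, xy², yz²`. Among
the remaining cubic monomials `x²y²z²` only splits as `xyz · xyz`, so its coefficient in `∑ pᵢ²` is
`∑ (coeff xyz pᵢ)² ≥ 0`, whereas in `s` it is `-3`.
-/

open MvPolynomial

def NotProperMidpoint {M : Type*} [Add M] (S : Set M) (u : M) : Prop :=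
  ∀ a ∈ S, ∀ b ∈ S, a + b = u + u → a = u

namespace MvPolynomial

variable {σ R ι : Type*}

section CommSemiring

variable [CommSemiring R]

theorem coeff_add_self_sq {p : MvPolynomial σ R} {S : Set (σ →₀ ℕ)} (hp : ↑p.support ⊆ S)
    {u : σ →₀ ℕ} (hu : NotProperMidpoint S u) : coeff (u + u) (p ^ 2) = coeff u p ^ 2 := by
  classical
  rw [sq, coeff_mul, Finset.sum_eq_single (u, u) ?_ (by simp), sq]
  rintro ⟨a, b⟩ hab hne
  by_contra h
  have hab : a + b = u + u := Finset.HasAntidiagonal.mem_antidiagonal.mp hab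
  obtain rfl := hu a (hp (mem_support_iff.mpr (left_ne_zero_of_mul h)))
    b (hp (mem_support_iff.mpr (right_ne_zero_of_mul h))) hab
  exact hne (by rw [add_left_cancel hab])

theorem coeff_add_self_sum_sq [Fintype ι] {p : ι → MvPolynomial σ R} {S : Set (σ →₀ ℕ)}
    (hp : ∀ i, ↑(p i).support ⊆ S) {u : σ →₀ ℕ} (hu : NotProperMidpoint S u) :
    coeff (u + u) (∑ i, p i ^ 2) = ∑ i, coeff u (p i) ^ 2 := by
  rw [coeff_sum]
  exact Finset.sum_congr rfl fun i _ ↦ coeff_add_self_sq (hp i) hu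

theorem IsHomogeneous.support_subset {p : MvPolynomial σ R} {n : ℕ} (hp : p.IsHomogeneous n) :
    ↑p.support ⊆ {d : σ →₀ ℕ | d.degree = n} := fun _ hd ↦
  not_not.mp fun h ↦ mem_support_iff.mp hd (hp.coeff_eq_zero h)

end CommSemiring

section Ordered

variable [CommRing R] [LinearOrder R] [IsStrictOrderedRing R] [Fintype ι]
  {p : ι → MvPolynomial σ R} {S : Set (σ →₀ ℕ)}

theorem coeff_add_self_sum_sq_nonneg (hp : ∀ i, ↑(p i).support ⊆ S) {u : σ →₀ ℕ}
    (hu : NotProperMidpoint S u) : 0 ≤ coeff (u + u) (∑ i, p i ^ 2) := by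
  rw [coeff_add_self_sum_sq hp hu]
  positivity

theorem support_subset_diff_of_coeff_sum_sq_eq_zero (hp : ∀ i, ↑(p i).support ⊆ S)
    {U : Set (σ →₀ ℕ)} (hU : ∀ u ∈ U, NotProperMidpoint S u)
    (hzero : ∀ u ∈ U, coeff (u + u) (∑ i, p i ^ 2) = 0) (i : ι) :
    ↑(p i).support ⊆ S \ U := by
  intro d hd
  refine ⟨hp i hd, fun hdU ↦ mem_support_iff.mp hd ?_⟩
  have h := hzero d hdU
  rw [coeff_add_self_sum_sq hp (hU d hdU),
    Finset.sum_eq_zero_iff_of_nonneg fun j _ ↦ sq_nonneg _] at h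
  exact pow_eq_zero_iff two_ne_zero |>.mp (h i (Finset.mem_univ i))

end Ordered

end MvPolynomial

noncomputable def expVec (a b c : ℕ) : Fin 3 →₀ ℕ :=
  Finsupp.single 0 a + Finsupp.single 1 b + Finsupp.single 2 c

@[simp] lemma expVec_apply_zero (a b c : ℕ) : expVec a b c 0 = a := by simp [expVec]
@[simp] lemma expVec_apply_one (a b c : ℕ) : expVec a b c 1 = b := by simp [expVec]
@[simp] lemma expVec_apply_two (a b c : ℕ) : expVec a b c 2 = c := by simp [expVec]

lemma forall_expVec {P : (Fin 3 →₀ ℕ) → Prop} : (∀ d, P d) ↔ ∀ a b c, P (expVec a b c) := by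
  refine ⟨fun h _ _ _ ↦ h _, fun h d ↦ ?_⟩
  convert h (d 0) (d 1) (d 2)
  ext i; fin_cases i <;> simp

@[simp] lemma expVec_inj {a b c a' b' c' : ℕ} :
    expVec a b c = expVec a' b' c' ↔ a = a' ∧ b = b' ∧ c = c' := by
  refine ⟨fun h ↦ ?_, by rintro ⟨rfl, rfl, rfl⟩; rfl⟩
  simp only [DFunLike.ext_iff, Fin.forall_fin_succ] at h
  simpa using h

@[simp] lemma expVec_add (a b c a' b' c' : ℕ) :
    expVec a b c + expVec a' b' c' = expVec (a + a') (b + b') (c + c') := by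
  ext i; fin_cases i <;> simp

@[simp] lemma degree_expVec (a b c : ℕ) : (expVec a b c).degree = a + b + c := by
  simp [expVec, add_assoc]

lemma X_pow_mul_X_pow_mul_X_pow_eq_monomial {R : Type*} [CommSemiring R] (a b c : ℕ) :
    (X 0 ^ a * X 1 ^ b * X 2 ^ c : MvPolynomial (Fin 3) R) = monomial (expVec a b c) 1 := by
  simp [X_pow_eq_monomial, monomial_mul, expVec]

lemma notProperMidpoint_pure_cube :
    ∀ u ∈ ({expVec 3 0 0, expVec 0 3 0, expVec 0 0 3} : Set (Fin 3 →₀ ℕ)),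
      NotProperMidpoint {d | d.degree = 3} u := by
  simp only [NotProperMidpoint, Set.mem_insert_iff, Set.mem_singleton_iff, forall_eq_or_imp,
    forall_eq, Set.mem_ofPred_eq, forall_expVec, expVec_add, expVec_inj, degree_expVec]
  and_intros <;> intros <;> grind

lemma notProperMidpoint_x2z_xy2_yz2 :
    ∀ u ∈ ({expVec 2 0 1, expVec 1 2 0, expVec 0 1 2} : Set (Fin 3 →₀ ℕ)),
      NotProperMidpoint ({d | d.degree = 3} \ {expVec 3 0 0, expVec 0 3 0, expVec 0 0 3}) u := by
  simp only [NotProperMidpoint, Set.mem_sdiff, Set.mem_insert_iff, Set.mem_singleton_iff,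
    forall_eq_or_imp, forall_eq, Set.mem_ofPred_eq, forall_expVec, expVec_add, expVec_inj,
    degree_expVec]
  and_intros <;> intros <;> grind

lemma notProperMidpoint_xyz :
    NotProperMidpoint (({d | d.degree = 3} \ {expVec 3 0 0, expVec 0 3 0, expVec 0 0 3}) \
      {expVec 2 0 1, expVec 1 2 0, expVec 0 1 2}) (expVec 1 1 1) := by
  simp only [NotProperMidpoint, Set.mem_sdiff, Set.mem_insert_iff, Set.mem_singleton_iff,
    Set.mem_ofPred_eq, forall_expVec, expVec_add, expVec_inj, degree_expVec]
  intros; grind (splits := 20)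

lemma choiLam_sextic_eq_sum_monomial :
    (X 0 ^ 4 * X 1 ^ 2 + X 1 ^ 4 * X 2 ^ 2 + X 2 ^ 4 * X 0 ^ 2
        - 3 * X 0 ^ 2 * X 1 ^ 2 * X 2 ^ 2 : MvPolynomial (Fin 3) ℝ)
      = monomial (expVec 4 2 0) 1 + monomial (expVec 0 4 2) 1 + monomial (expVec 2 0 4) 1
        - monomial (expVec 2 2 2) 3 := by
  rw [show (monomial (expVec 2 2 2) (3 : ℝ)) = C 3 * monomial (expVec 2 2 2) 1 by
    rw [C_mul_monomial, mul_one]]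
  simp only [← X_pow_mul_X_pow_mul_X_pow_eq_monomial, map_ofNat]
  ring

theorem choi_lam_sextic_not_sos :
    ¬ ∃ (r : ℕ) (p : Fin r → MvPolynomial (Fin 3) ℝ),
      (∀ i, (p i).IsHomogeneous 3) ∧
      (X 0 ^ 4 * X 1 ^ 2 + X 1 ^ 4 * X 2 ^ 2 + X 2 ^ 4 * X 0 ^ 2
        - 3 * X 0 ^ 2 * X 1 ^ 2 * X 2 ^ 2 : MvPolynomial (Fin 3) ℝ) = ∑ i, (p i) ^ 2 := by
  rintro ⟨r, p, hp, hs⟩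
  rw [choiLam_sextic_eq_sum_monomial] at hs
  have hno_cube := support_subset_diff_of_coeff_sum_sq_eq_zero
    (fun i ↦ (hp i).support_subset) notProperMidpoint_pure_cube (by simp [← hs, coeff_monomial])
  have hno_x2z := support_subset_diff_of_coeff_sum_sq_eq_zero hno_cube
    notProperMidpoint_x2z_xy2_yz2 (by simp [← hs, coeff_monomial])
  have hxyz := coeff_add_self_sum_sq_nonneg hno_x2z notProperMidpoint_xyz
  norm_num [← hs, coeff_monomial] at hxyz
end

section
/- For η > 0 the form q_η(w,x,y,z) = w^4 + x^2y^2 + y^2z^2 + z^2x^2 - 4wxyz + η(x^4 + y^4 + z^4) is positive definite, i.e. q_η(a) > 0 for every nonzero a in R^4. -/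
theorem q_eta_pos_def (η : ℝ) (hη : 0 < η) (w x y z : ℝ)
    (h : ¬ (w = 0 ∧ x = 0 ∧ y = 0 ∧ z = 0)) :
    0 < w^4 + x^2*y^2 + y^2*z^2 + z^2*x^2 - 4*w*x*y*z + η*(x^4 + y^4 + z^4) := by
  set a := |w| with ha
  set b := |x| with hb
  set c := |y| with hc
  set d := |z| with hd
  have ha0 : 0 ≤ a := abs_nonneg w
  have hb0 : 0 ≤ b := abs_nonneg x
  have hc0 : 0 ≤ c := abs_nonneg y
  have hd0 : 0 ≤ d := abs_nonneg z
  have key : 4*(b*c*d) * a ≤ a^4 + b^2*c^2 + c^2*d^2 + d^2*b^2 := by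
    nlinarith [sq_nonneg (c*(b-d)), sq_nonneg (a^2 - b*d),
      mul_nonneg (mul_nonneg hb0 hd0) (sq_nonneg (a - c))]
  have habs : w*x*y*z ≤ a*b*c*d := by
    calc w*x*y*z ≤ |w*x*y*z| := le_abs_self _
    _ = a*b*c*d := by rw [abs_mul, abs_mul, abs_mul]
  have hsq : a^2 = w^2 ∧ b^2 = x^2 ∧ c^2 = y^2 ∧ d^2 = z^2 :=
    ⟨sq_abs w, sq_abs x, sq_abs y, sq_abs z⟩
  obtain ⟨h1, h2, h3, h4⟩ := hsq
  have h0 : 0 ≤ w^4 + x^2*y^2 + y^2*z^2 + z^2*x^2 - 4*w*x*y*z := by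
    have e1 : a^4 = w^4 := by nlinarith [h1]
    nlinarith [key, habs]
  by_cases hx : x = 0 ∧ y = 0 ∧ z = 0
  · obtain ⟨hx, hy, hz⟩ := hx
    have hw : w ≠ 0 := fun hw => h ⟨hw, hx, hy, hz⟩
    subst hx hy hz
    have : 0 < w^4 := by positivity
    nlinarith [this]
  · have hpos : 0 < x^4 + y^4 + z^4 := by
      rcases not_and_or.mp hx with h1 | h2
      · positivity
      rcases not_and_or.mp h2 with h1 | h1 <;> positivity
    nlinarith [mul_pos hη hpos]
end

section
/- Let η0 > 0 satisfy that √η0 is a root of X^3 - X/2 + 1/9 = 0. Then q_{η0}(w,x,y,z) = (w^2 - √η0 (x^2+y^2+z^2))^2 + (2/(9√η0))[(3√η0 wx - yz)^2 + (3√η0 wy - zx)^2 + (3√η0 wz - xy)^2], where q_{η0} = w^4 + x^2y^2 + y^2z^2 + z^2x^2 - 4wxyz + η0(x^4+y^4+z^4]. -/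
theorem q_eta0_sos_identity (t : ℝ) (ht : 0 < t) (hroot : t^3 - t/2 + 1/9 = 0)
    (w x y z : ℝ) :
    w^4 + x^2*y^2 + y^2*z^2 + z^2*x^2 - 4*w*x*y*z + t^2*(x^4 + y^4 + z^4)
      = (w^2 - t*(x^2 + y^2 + z^2))^2
        + (2/(9*t)) * ((3*t*w*x - y*z)^2 + (3*t*w*y - z*x)^2 + (3*t*w*z - x*y)^2) := by
  have ht' : t ≠ 0 := ne_of_gt ht
  field_simp
  linear_combination (-18*(x^2*y^2 + y^2*z^2 + z^2*x^2)) * hroot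
end

section
/- Let t > 0 with t ≠ 1/3. Then the only common complex solution of the system w^2 - t(x^2+y^2+z^2) = 0, 3t·wx - yz = 0, 3t·wy - zx = 0, 3t·wz - xy = 0 is (w,x,y,z) = (0,0,0,0) in C^4. -/
theorem q_eta0_system_coercive (t : ℝ) (ht : 0 < t) (ht' : t ≠ 1/3)
    (w x y z : ℂ)
    (h1 : w^2 - (t : ℂ)*(x^2 + y^2 + z^2) = 0)
    (h2 : 3*(t : ℂ)*w*x - y*z = 0)
    (h3 : 3*(t : ℂ)*w*y - z*x = 0)
    (h4 : 3*(t : ℂ)*w*z - x*y = 0) :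
    w = 0 ∧ x = 0 ∧ y = 0 ∧ z = 0 := by
  have htc : (t : ℂ) ≠ 0 := by exact_mod_cast ht.ne'
  by_cases hw : w = 0
  · subst hw
    have hsum : x^2 + y^2 + z^2 = 0 := by
      have h1' : (t : ℂ) * (x^2 + y^2 + z^2) = 0 := by linear_combination -h1
      rcases mul_eq_zero.mp h1' with h | h
      · exact absurd h htc
      · exact h
    have hyz : y*z = 0 := by linear_combination -h2
    have hzx : z*x = 0 := by linear_combination -h3
    have hxy : x*y = 0 := by linear_combination -h4
    rcases mul_eq_zero.mp hxy with hx | hy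
    · subst hx
      rcases mul_eq_zero.mp hyz with hy | hz
      · subst hy
        have hz : z = 0 := by
          have : z^2 = 0 := by linear_combination hsum
          exact pow_eq_zero_iff (by norm_num) |>.mp this
        exact ⟨rfl, rfl, rfl, hz⟩
      · subst hz
        have hy : y = 0 := by
          have : y^2 = 0 := by linear_combination hsum
          exact pow_eq_zero_iff (by norm_num) |>.mp this
        exact ⟨rfl, rfl, hy, rfl⟩
    · subst hy
      rcases mul_eq_zero.mp hzx with hz | hx
      · subst hz
        have hx : x = 0 := by
          have : x^2 = 0 := by linear_combination hsum
          exact pow_eq_zero_iff (by norm_num) |>.mp this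
        exact ⟨rfl, hx, rfl, rfl⟩
      · subst hx
        have hz : z = 0 := by
          have : z^2 = 0 := by linear_combination hsum
          exact pow_eq_zero_iff (by norm_num) |>.mp this
        exact ⟨rfl, rfl, rfl, hz⟩
  · exfalso
    have hA : 3*(t : ℂ)*w ≠ 0 := by
      intro h
      rcases mul_eq_zero.mp h with h' | h'
      · rcases mul_eq_zero.mp h' with h'' | h''
        · norm_num at h''
        · exact htc h''
      · exact hw h'
    have h5 : x^2 = y^2 := by
      have : (3*(t : ℂ)*w) * x^2 = (3*(t : ℂ)*w) * y^2 := by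
        linear_combination x*h2 - y*h3
      exact mul_left_cancel₀ hA this
    have h6 : x^2 = z^2 := by
      have : (3*(t : ℂ)*w) * x^2 = (3*(t : ℂ)*w) * z^2 := by
        linear_combination x*h2 - z*h4
      exact mul_left_cancel₀ hA this
    have h7 : w^2 = 3*(t : ℂ)*x^2 := by
      linear_combination h1 - (t : ℂ)*h5 - (t : ℂ)*h6
    have key : (1 - 27*(t : ℂ)^3) * x^6 = 0 := by
      linear_combination (x^2*z^2)*h5 + (x^2*y^2)*h6
        - x*(x*y*z + 3*(t : ℂ)*w*x^2)*h2 + 9*(t : ℂ)^2*x^4*h7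
        - x^2*(z^2 - x^2)*h5
    rcases mul_eq_zero.mp key with h | h
    · have ht3 : (27 : ℝ) * t^3 = 1 := by
        have : (27 : ℂ) * (t : ℂ)^3 = 1 := by linear_combination -h
        exact_mod_cast this
      have hfac : (t - 1/3) * (t^2 + t/3 + 1/9) = 0 := by linear_combination (1/27 : ℝ) * ht3
      rcases mul_eq_zero.mp hfac with h' | h'
      · exact ht' (by linarith)
      · nlinarith [sq_nonneg t, ht]
    · have hx : x = 0 := pow_eq_zero_iff (by norm_num) |>.mp h
      have : w^2 = 0 := by rw [h7, hx]; ring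
      exact hw (pow_eq_zero_iff (by norm_num) |>.mp this)
end

section
/- For every real γ with 0 < γ < 1 and all positive reals a1, a2, a3, a4, the quartic form a1(3w^2 - γ(x^2+y^2+z^2))^2 + a2(wx - yz)^2 + a3(wy - zx)^2 + a4(wz - xy)^2 is positive definite on R^4. -/
theorem gamma_quartic_pos_def (γ a1 a2 a3 a4 : ℝ) (hγ0 : 0 < γ) (hγ1 : γ < 1)
    (h1 : 0 < a1) (h2 : 0 < a2) (h3 : 0 < a3) (h4 : 0 < a4)
    (w x y z : ℝ) (h : ¬ (w = 0 ∧ x = 0 ∧ y = 0 ∧ z = 0)) :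
    0 < a1*(3*w^2 - γ*(x^2 + y^2 + z^2))^2 + a2*(w*x - y*z)^2
      + a3*(w*y - z*x)^2 + a4*(w*z - x*y)^2 := by
  by_contra hc
  push_neg at hc
  have n1 : 0 ≤ a1*(3*w^2 - γ*(x^2 + y^2 + z^2))^2 := by positivity
  have n2 : 0 ≤ a2*(w*x - y*z)^2 := by positivity
  have n3 : 0 ≤ a3*(w*y - z*x)^2 := by positivity
  have n4 : 0 ≤ a4*(w*z - x*y)^2 := by positivity
  have z1 : a1*(3*w^2 - γ*(x^2 + y^2 + z^2))^2 = 0 := le_antisymm (by linarith) n1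
  have z2 : a2*(w*x - y*z)^2 = 0 := le_antisymm (by linarith) n2
  have z3 : a3*(w*y - z*x)^2 = 0 := le_antisymm (by linarith) n3
  have z4 : a4*(w*z - x*y)^2 = 0 := le_antisymm (by linarith) n4
  have e1 : 3*w^2 = γ*(x^2 + y^2 + z^2) := by
    have := pow_eq_zero_iff (n := 2) (by norm_num) |>.mp
      ((mul_eq_zero.mp z1).resolve_left (ne_of_gt h1))
    linarith
  have e2 : w*x = y*z := by
    have := pow_eq_zero_iff (n := 2) (by norm_num) |>.mp
      ((mul_eq_zero.mp z2).resolve_left (ne_of_gt h2))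
    linarith
  have e3 : w*y = z*x := by
    have := pow_eq_zero_iff (n := 2) (by norm_num) |>.mp
      ((mul_eq_zero.mp z3).resolve_left (ne_of_gt h3))
    linarith
  have e4 : w*z = x*y := by
    have := pow_eq_zero_iff (n := 2) (by norm_num) |>.mp
      ((mul_eq_zero.mp z4).resolve_left (ne_of_gt h4))
    linarith
  clear hc n1 n2 n3 n4 z1 z2 z3 z4
  by_cases hw : w = 0
  · subst hw
    have hs : x^2 + y^2 + z^2 = 0 := by
      have : γ*(x^2 + y^2 + z^2) = 0 := by linarith
      rcases mul_eq_zero.mp this with h' | h'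
      · exact absurd h' (ne_of_gt hγ0)
      · exact h'
    have hx2 : x^2 = 0 := by linarith [sq_nonneg x, sq_nonneg y, sq_nonneg z]
    have hy2 : y^2 = 0 := by linarith [sq_nonneg x, sq_nonneg y, sq_nonneg z]
    have hz2 : z^2 = 0 := by linarith [sq_nonneg x, sq_nonneg y, sq_nonneg z]
    have hx : x = 0 := by exact pow_eq_zero_iff (n := 2) (by norm_num) |>.mp hx2
    have hy : y = 0 := by exact pow_eq_zero_iff (n := 2) (by norm_num) |>.mp hy2
    have hz : z = 0 := by exact pow_eq_zero_iff (n := 2) (by norm_num) |>.mp hz2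
    exact h ⟨rfl, hx, hy, hz⟩
  · -- w ≠ 0; derive x² = y² = z² and reach contradiction with γ < 1
    have hw2 : 0 < w^2 := by positivity
    have p2 : w^2*x^2 = w*x*y*z := by
      calc w^2*x^2 = (w*x)*(w*x) := by ring
        _ = (w*x)*(y*z) := by rw [e2]
        _ = w*x*y*z := by ring
    have p3 : w^2*y^2 = w*x*y*z := by
      calc w^2*y^2 = (w*y)*(w*y) := by ring
        _ = (w*y)*(z*x) := by rw [e3]
        _ = w*x*y*z := by ring
    have p4 : w^2*z^2 = w*x*y*z := by
      calc w^2*z^2 = (w*z)*(w*z) := by ring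
        _ = (w*z)*(x*y) := by rw [e4]
        _ = w*x*y*z := by ring
    have hxy : x^2 = y^2 := by
      have : w^2*x^2 = w^2*y^2 := by linarith
      exact mul_left_cancel₀ (ne_of_gt hw2) this
    have hxz : x^2 = z^2 := by
      have : w^2*x^2 = w^2*z^2 := by linarith
      exact mul_left_cancel₀ (ne_of_gt hw2) this
    have q2 : y^2*z^2 = w*x*y*z := by
      calc y^2*z^2 = (y*z)*(y*z) := by ring
        _ = (w*x)*(y*z) := by rw [e2]
        _ = w*x*y*z := by ring
    have hw2x : w^2 = γ * x^2 := by
      rw [← hxy, ← hxz] at e1; linarith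
    have hx4 : w^2 * x^2 = x^2 * x^2 := by
      rw [← hxy, ← hxz] at q2; linarith
    have h5 : γ * (x^2 * x^2) = x^2 * x^2 := by
      calc γ * (x^2 * x^2) = (γ * x^2) * x^2 := by ring
        _ = w^2 * x^2 := by rw [hw2x]
        _ = x^2 * x^2 := hx4
    have hx0 : x^2 * x^2 = 0 := by
      by_contra hne
      have hpos : 0 < x^2 * x^2 := lt_of_le_of_ne (by positivity) (Ne.symm hne)
      nlinarith [mul_pos (by linarith : (0:ℝ) < 1 - γ) hpos]
    have hx2 : x^2 = 0 := by
      rcases mul_eq_zero.mp hx0 with h' | h' <;> exact h'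
    have : w^2 = 0 := by rw [hw2x, hx2, mul_zero]
    exact absurd this (ne_of_gt hw2)
end

section
/- For 0 < γ < 1 the four quadratic forms 3w^2 - γ(x^2+y^2+z^2), wx - yz, wy - zx, wz - xy have no common nonzero solution in C^4. -/
theorem gamma_quartic_coercive (γ : ℝ) (hγ0 : 0 < γ) (hγ1 : γ < 1)
    (w x y z : ℂ)
    (h1 : 3*w^2 - (γ : ℂ)*(x^2 + y^2 + z^2) = 0)
    (h2 : w*x - y*z = 0) (h3 : w*y - z*x = 0) (h4 : w*z - x*y = 0) :
    w = 0 ∧ x = 0 ∧ y = 0 ∧ z = 0 := by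
  have hγc : (γ : ℂ) ≠ 0 := by exact_mod_cast hγ0.ne'
  by_cases hw : w = 0
  · subst hw
    have hyz : y*z = 0 := by linear_combination -h2
    have hzx : z*x = 0 := by linear_combination -h3
    have hxy : x*y = 0 := by linear_combination -h4
    have hs : x^2 + y^2 + z^2 = 0 := by
      have h : (γ:ℂ) * (x^2+y^2+z^2) = 0 := by linear_combination -h1
      exact (mul_eq_zero.mp h).resolve_left hγc
    rcases mul_eq_zero.mp hxy with hx | hy
    · subst hx
      rcases mul_eq_zero.mp hyz with hy | hz
      · subst hy
        have hz : z = 0 := by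
          have h : z^2 = 0 := by linear_combination hs
          exact pow_eq_zero_iff (by norm_num) |>.mp h
        exact ⟨rfl, rfl, rfl, hz⟩
      · subst hz
        have hy : y = 0 := by
          have h : y^2 = 0 := by linear_combination hs
          exact pow_eq_zero_iff (by norm_num) |>.mp h
        exact ⟨rfl, rfl, hy, rfl⟩
    · subst hy
      rcases mul_eq_zero.mp hzx with hz | hx
      · subst hz
        have hx : x = 0 := by
          have h : x^2 = 0 := by linear_combination hs
          exact pow_eq_zero_iff (by norm_num) |>.mp h
        exact ⟨rfl, hx, rfl, rfl⟩
      · subst hx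
        have hz : z = 0 := by
          have h : z^2 = 0 := by linear_combination hs
          exact pow_eq_zero_iff (by norm_num) |>.mp h
        exact ⟨rfl, rfl, rfl, hz⟩
  · exfalso
    have hw2 : w^2 ≠ 0 := pow_ne_zero _ hw
    have hx : x ≠ 0 := by
      intro hx; subst hx
      have hy : y = 0 := by
        have h : w*y = 0 := by linear_combination h3
        exact (mul_eq_zero.mp h).resolve_left hw
      have hz : z = 0 := by
        have h : w*z = 0 := by linear_combination h4
        exact (mul_eq_zero.mp h).resolve_left hw
      subst hy; subst hz
      have h : (3:ℂ)*w^2 = 0 := by linear_combination h1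
      exact hw2 ((mul_eq_zero.mp h).resolve_left (by norm_num))
    have hy : y ≠ 0 := by
      intro hy; subst hy
      apply hx
      have h : w*x = 0 := by linear_combination h2
      exact (mul_eq_zero.mp h).resolve_left hw
    have hz : z ≠ 0 := by
      intro hz; subst hz
      apply hx
      have h : w*x = 0 := by linear_combination h2
      exact (mul_eq_zero.mp h).resolve_left hw
    have ez : w^2 - z^2 = 0 := by
      have h : x*(y*(w^2 - z^2)) = 0 := by linear_combination w*y*h2 + y*z*h3
      exact ((mul_eq_zero.mp ((mul_eq_zero.mp h).resolve_left hx)).resolve_left hy)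
    have ey : w^2 - y^2 = 0 := by
      have h : x*(z*(w^2 - y^2)) = 0 := by linear_combination w*z*h2 + y*z*h4
      exact ((mul_eq_zero.mp ((mul_eq_zero.mp h).resolve_left hx)).resolve_left hz)
    have ex : w^2 - x^2 = 0 := by
      have h : y*(z*(w^2 - x^2)) = 0 := by linear_combination w*z*h3 + x*z*h4
      exact ((mul_eq_zero.mp ((mul_eq_zero.mp h).resolve_left hy)).resolve_left hz)
    have hfin : (3*(1-(γ:ℂ)))*w^2 = 0 := by
      linear_combination h1 - (γ:ℂ)*(ex + ey + ez)
    have h1γ : (1:ℂ) - γ ≠ 0 := by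
      have : (γ:ℂ) ≠ 1 := by exact_mod_cast hγ1.ne
      intro h; apply this; linear_combination -h
    have : (3*(1-(γ:ℂ))) ≠ 0 := by
      intro h
      apply h1γ
      have := (mul_eq_zero.mp h).resolve_left (by norm_num : (3:ℂ) ≠ 0)
      exact this
    exact hw2 ((mul_eq_zero.mp hfin).resolve_left this)
end

section
/- Let A be a real symmetric m×m positive semidefinite matrix and B a real symmetric m×m matrix that is positive semidefinite on Null(A). Then the following are equivalent: (1) for all sufficiently small ε > 0, A + εB is positive semidefinite; (2) for every z ∈ Null(A) with z·Bz = 0 one has Bz = 0. -/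
/-!
Split `ℝᵐ = K ⊕ C` with `K = Null A ∩ Null B`; the quadratic forms of `A` and `B` only see the
`C`-component, so it suffices to make `x·Ax + ε x·Bx` nonnegative on the unit sphere of `C`.
There `x·Ax ≥ 0`, and where `x·Ax = 0` we have `x ∈ Null A`, so `x·Bx ≥ 0`, with equality
excluded by (2) since `x ∉ K`. Compactness of the sphere then yields a uniform `ε`.
The converse holds because `z·(A + εB)z = 0` forces `(A + εB)z = 0` for a semidefinite matrix.
-/

open Matrix

/- On the part of the compact set where `g ≤ 0`, `f` is bounded below by some `c > 0`, while
`g` is bounded below on the whole set; so `f + δ g > 0` there once `δ` is small, and elsewhere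
it is positive trivially. -/
theorem IsCompact.exists_pos_forall_pos_add_mul {X : Type*} [TopologicalSpace X] {S : Set X}
    (hS : IsCompact S) {f g : X → ℝ} (hf : Continuous f) (hg : Continuous g)
    (hf_nonneg : ∀ x ∈ S, 0 ≤ f x) (hg_pos : ∀ x ∈ S, f x = 0 → 0 < g x) :
    ∃ ε > 0, ∀ δ, 0 < δ → δ ≤ ε → ∀ x ∈ S, 0 < f x + δ * g x := by
  obtain ⟨c, hc, hfc⟩ : ∃ c, 0 < c ∧ ∀ x ∈ S ∩ {x | g x ≤ 0}, c ≤ f x :=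
    (hS.inter_right (isClosed_le hg continuous_const)).exists_forall_le' hf.continuousOn
      fun x ⟨hxS, hgx⟩ => (hf_nonneg x hxS).lt_of_ne' fun h => (hg_pos x hxS h).not_ge hgx
  obtain ⟨G, hG⟩ := hS.exists_bound_of_continuousOn hg.continuousOn
  refine ⟨c / (|G| + 1), by positivity, fun δ hδ hδε x hx => ?_⟩
  rcases lt_or_ge 0 (g x) with hgx | hgx
  · nlinarith [hf_nonneg x hx]
  · have hcf := hfc x ⟨hx, hgx⟩
    have hgG : -|G| ≤ g x := by
      have := hG x hx
      rw [Real.norm_eq_abs] at this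
      linarith [neg_abs_le (g x), le_abs_self G]
    rw [le_div_iff₀ (by positivity)] at hδε
    nlinarith

section

variable {n : Type*} [Fintype n]

open scoped ComplexOrder in
theorem Matrix.PosSemidef.mulVec_eq_zero_of_add_smul {𝕜 : Type*} [RCLike 𝕜] {A B : Matrix n n 𝕜}
    {ε : 𝕜} (h : (A + ε • B).PosSemidef) (hε : ε ≠ 0) {z : n → 𝕜} (hAz : A *ᵥ z = 0)
    (hBz : star z ⬝ᵥ B *ᵥ z = 0) : B *ᵥ z = 0 := by
  have hz : (A + ε • B) *ᵥ z = 0 := by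
    rw [← h.dotProduct_mulVec_zero_iff, add_mulVec, smul_mulVec, hAz, zero_add, dotProduct_smul,
      hBz, smul_zero]
  rw [add_mulVec, hAz, zero_add, smul_mulVec] at hz
  exact (smul_eq_zero.mp hz).resolve_left hε

theorem Matrix.IsSymm.add_dotProduct_mulVec_add {R : Type*} [CommSemiring R] {M : Matrix n n R}
    (hM : M.IsSymm) {k : n → R} (hk : M *ᵥ k = 0) (x : n → R) :
    (k + x) ⬝ᵥ M *ᵥ (k + x) = x ⬝ᵥ M *ᵥ x := by
  have hkM : k ᵥ* M = 0 := by rw [← hM.eq, vecMul_transpose, hk]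
  rw [mulVec_add, hk, zero_add, add_dotProduct, dotProduct_mulVec k, hkM, zero_dotProduct,
    zero_add]

theorem Matrix.smul_dotProduct_mulVec_smul {R : Type*} [CommSemiring R] (M : Matrix n n R)
    (t : R) (x : n → R) : (t • x) ⬝ᵥ M *ᵥ (t • x) = t * t * (x ⬝ᵥ M *ᵥ x) := by
  rw [mulVec_smul, smul_dotProduct, dotProduct_smul, smul_eq_mul, smul_eq_mul, mul_assoc]

theorem Matrix.dotProduct_mulVec_nonneg_of_forall_norm_eq_one {M : Matrix n n ℝ}
    {C : Submodule ℝ (n → ℝ)} (hC : ∀ u ∈ C, ‖u‖ = 1 → 0 ≤ u ⬝ᵥ M *ᵥ u) {x : n → ℝ}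
    (hx : x ∈ C) : 0 ≤ x ⬝ᵥ M *ᵥ x := by
  rcases eq_or_ne x 0 with rfl | hx0
  · simp
  have hnorm : ‖x‖ ≠ 0 := norm_ne_zero_iff.mpr hx0
  have hxu : x = ‖x‖ • (‖x‖⁻¹ • x) := by rw [smul_smul, mul_inv_cancel₀ hnorm, one_smul]
  rw [hxu, smul_dotProduct_mulVec_smul]
  refine mul_nonneg (mul_self_nonneg _) (hC _ (C.smul_mem _ hx) ?_)
  rw [norm_smul, norm_inv, norm_norm, inv_mul_cancel₀ hnorm]

theorem Matrix.posSemidef_of_isCompl {M : Matrix n n ℝ} (hM : M.IsSymm)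
    {K C : Submodule ℝ (n → ℝ)} (hKC : IsCompl K C) (hK : ∀ k ∈ K, M *ᵥ k = 0)
    (hC : ∀ u ∈ C, ‖u‖ = 1 → 0 ≤ u ⬝ᵥ M *ᵥ u) : M.PosSemidef := by
  refine posSemidef_iff_dotProduct_mulVec.mpr ⟨isHermitian_iff_isSymm.mpr hM, fun x => ?_⟩
  obtain ⟨k, hk, c, hc, rfl⟩ := Submodule.mem_sup.mp (hKC.sup_eq_top ▸ Submodule.mem_top (x := x))
  rw [star_trivial, hM.add_dotProduct_mulVec_add (hK k hk)]
  exact dotProduct_mulVec_nonneg_of_forall_norm_eq_one hC hc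

end

theorem possemidef_perturbation_iff {m : ℕ} (A B : Matrix (Fin m) (Fin m) ℝ)
    (hA : A.PosSemidef) (hB : B.IsSymm)
    (hBnull : ∀ z : Fin m → ℝ, A.mulVec z = 0 → 0 ≤ z ⬝ᵥ B.mulVec z) :
    (∃ ε₀ > 0, ∀ ε : ℝ, 0 < ε → ε ≤ ε₀ → (A + ε • B).PosSemidef) ↔
    (∀ z : Fin m → ℝ, A.mulVec z = 0 → z ⬝ᵥ B.mulVec z = 0 → B.mulVec z = 0) := by
  constructor
  · rintro ⟨ε₀, hε₀, hpsd⟩ z hAz hBz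
    exact (hpsd ε₀ hε₀ le_rfl).mulVec_eq_zero_of_add_smul hε₀.ne' hAz (by rwa [star_trivial])
  intro hker
  set K := LinearMap.ker A.mulVecLin ⊓ LinearMap.ker B.mulVecLin
  obtain ⟨C, hKC⟩ := K.exists_isCompl
  have hpos : ∀ u ∈ Metric.sphere 0 1 ∩ (C : Set (Fin m → ℝ)),
      u ⬝ᵥ A *ᵥ u = 0 → 0 < u ⬝ᵥ B *ᵥ u := by
    rintro u ⟨hu, huC⟩ hAu
    replace hAu : A *ᵥ u = 0 := (hA.dotProduct_mulVec_zero_iff u).mp (by rwa [star_trivial])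
    refine (hBnull u hAu).lt_of_ne' fun hBu => ?_
    have huK : u ∈ K := ⟨hAu, hker u hAu hBu⟩
    have hu0 : u = 0 := (Submodule.mem_bot ℝ).mp (hKC.inf_eq_bot ▸ ⟨huK, huC⟩)
    simp [hu0] at hu
  obtain ⟨ε₀, hε₀, hsmall⟩ :=
    ((isCompact_sphere 0 1).inter_right C.closed_of_finiteDimensional).exists_pos_forall_pos_add_mul
      (by fun_prop) (by fun_prop) (fun x _ => by simpa using hA.dotProduct_mulVec_nonneg x) hpos
  refine ⟨ε₀, hε₀, fun ε hε hεle => posSemidef_of_isCompl ?_ hKC ?_ fun u huC hu => ?_⟩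
  · exact (isHermitian_iff_isSymm.mp hA.isHermitian).add (hB.smul ε)
  · rintro k ⟨hAk, hBk⟩
    simp only [SetLike.mem_coe, LinearMap.mem_ker, mulVecLin_apply] at hAk hBk
    rw [add_mulVec, smul_mulVec, hAk, hBk, smul_zero, add_zero]
  · rw [add_mulVec, smul_mulVec, dotProduct_add, dotProduct_smul, smul_eq_mul]
    exact (hsmall ε hε hεle u ⟨by simpa using hu, huC⟩).le
end

section
/- Let A be a real symmetric m×m positive semidefinite matrix, B real symmetric and psd on Null(A), and suppose A + εB is positive semidefinite for all small ε > 0. Then for all sufficiently small ε > 0, Null(A + εB) ⊆ Null(A); moreover the containment is strict if z·Bz does not vanish identically on Null(A). -/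
/-!
Since `2 (A + εB) = A + (A + 2εB)` is a sum of two positive semidefinite matrices once `2ε ≤ ε₀`,
and the kernel of such a sum is the intersection of the kernels, `Null(A + εB) ⊆ Null(A)`.
A vector `z ∈ Null(A)` with `z ⬝ Bz ≠ 0` has `(A + εB) z = ε Bz ≠ 0`, which makes the inclusion
strict.
-/

open Matrix

namespace Matrix

theorem add_smul_mulVec_ne_zero {n R : Type*} [Fintype n] [Ring R] [NoZeroDivisors R]
    {A B : Matrix n n R} {ε : R} {z : n → R} (hAz : A *ᵥ z = 0) (hε : ε ≠ 0)
    (hBz : B *ᵥ z ≠ 0) : (A + ε • B) *ᵥ z ≠ 0 := by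
  rw [add_mulVec, hAz, zero_add, smul_mulVec]
  exact smul_ne_zero hε hBz

section PosSemidef

open scoped ComplexOrder

variable {n 𝕜 : Type*} [Fintype n] [RCLike 𝕜]

theorem PosSemidef.mulVec_eq_zero_of_add_mulVec_eq_zero {P Q : Matrix n n 𝕜}
    (hP : P.PosSemidef) (hQ : Q.PosSemidef) {z : n → 𝕜} (hz : (P + Q) *ᵥ z = 0) :
    P *ᵥ z = 0 := by
  have hsum : star z ⬝ᵥ P *ᵥ z + star z ⬝ᵥ Q *ᵥ z = 0 := by
    rw [← dotProduct_add, ← add_mulVec, hz, dotProduct_zero]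
  have hPz : star z ⬝ᵥ P *ᵥ z = 0 :=
    ((add_eq_zero_iff_of_nonneg (hP.dotProduct_mulVec_nonneg z)
      (hQ.dotProduct_mulVec_nonneg z)).1 hsum).1
  exact (hP.dotProduct_mulVec_zero_iff z).1 hPz

theorem setOf_add_smul_mulVec_eq_zero_subset {A B : Matrix n n 𝕜} {ε : 𝕜}
    (hA : A.PosSemidef) (h2ε : (A + (2 * ε) • B).PosSemidef) :
    {z | (A + ε • B) *ᵥ z = 0} ⊆ {z | A *ᵥ z = 0} := by
  intro z (hz : (A + ε • B) *ᵥ z = 0)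
  refine hA.mulVec_eq_zero_of_add_mulVec_eq_zero h2ε ?_
  have hsum : A + (A + (2 * ε) • B) = (2 : 𝕜) • (A + ε • B) := by
    rw [smul_add, smul_smul, two_smul]; abel
  rw [hsum, smul_mulVec, hz, smul_zero]

end PosSemidef

end Matrix

theorem null_space_perturbation_general {m : ℕ} (A B : Matrix (Fin m) (Fin m) ℝ)
    (hA : A.PosSemidef)
    (hpsd : ∃ ε₀ > 0, ∀ ε : ℝ, 0 < ε → ε ≤ ε₀ → (A + ε • B).PosSemidef) :
    ∃ ε₀ > 0, ∀ ε : ℝ, 0 < ε → ε ≤ ε₀ →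
      ({z : Fin m → ℝ | (A + ε • B).mulVec z = 0} ⊆ {z | A.mulVec z = 0} ∧
       ((¬ ∀ z : Fin m → ℝ, A.mulVec z = 0 → z ⬝ᵥ B.mulVec z = 0) →
         {z : Fin m → ℝ | (A + ε • B).mulVec z = 0} ⊂ {z | A.mulVec z = 0})) := by
  obtain ⟨ε₀, hε₀, hpsd⟩ := hpsd
  refine ⟨ε₀ / 2, half_pos hε₀, fun ε hε hεle => ?_⟩
  have hsub := setOf_add_smul_mulVec_eq_zero_subset hA (hpsd (2 * ε) (by positivity) (by linarith))
  refine ⟨hsub, fun hBq => (Set.ssubset_iff_of_subset hsub).2 ?_⟩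
  push Not at hBq
  obtain ⟨z, hAz, hBz⟩ := hBq
  have hBz' : B *ᵥ z ≠ 0 := fun h => hBz (by rw [h, dotProduct_zero])
  exact ⟨z, hAz, add_smul_mulVec_ne_zero hAz hε.ne' hBz'⟩

theorem null_space_perturbation {m : ℕ} (A B : Matrix (Fin m) (Fin m) ℝ)
    (hA : A.PosSemidef) (hB : B.IsSymm)
    (hBnull : ∀ z : Fin m → ℝ, A.mulVec z = 0 → 0 ≤ z ⬝ᵥ B.mulVec z)
    (hpsd : ∃ ε₀ > 0, ∀ ε : ℝ, 0 < ε → ε ≤ ε₀ → (A + ε • B).PosSemidef) :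
    ∃ ε₀ > 0, ∀ ε : ℝ, 0 < ε → ε ≤ ε₀ →
      ({z : Fin m → ℝ | (A + ε • B).mulVec z = 0} ⊆ {z | A.mulVec z = 0} ∧
       ((¬ ∀ z : Fin m → ℝ, A.mulVec z = 0 → z ⬝ᵥ B.mulVec z = 0) →
         {z : Fin m → ℝ | (A + ε • B).mulVec z = 0} ⊂ {z | A.mulVec z = 0})) :=
  null_space_perturbation_general A B hA hpsd
end

section
/- The quartic form f(u,v,w,x,y,z) = (u^2 + v^2 + vw)^2 + (w^2 - γ(x^2+y^2+z^2))^2 + (wx - yz)^2 + (wy - zx)^2 + (wz - xy)^2 with 0 < γ < 1/3 is positive definite on R^6. -/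
theorem noncoercive_quartic_pos_def (γ : ℝ) (hγ0 : 0 < γ) (hγ1 : γ < 1/3)
    (u v w x y z : ℝ)
    (h : ¬ (u = 0 ∧ v = 0 ∧ w = 0 ∧ x = 0 ∧ y = 0 ∧ z = 0)) :
    0 < (u^2 + v^2 + v*w)^2 + (w^2 - γ*(x^2 + y^2 + z^2))^2
      + (w*x - y*z)^2 + (w*y - z*x)^2 + (w*z - x*y)^2 := by
  by_contra h'
  push_neg at h'
  have hS : (u^2 + v^2 + v*w)^2 + (w^2 - γ*(x^2 + y^2 + z^2))^2
      + (w*x - y*z)^2 + (w*y - z*x)^2 + (w*z - x*y)^2 = 0 :=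
    le_antisymm h' (by positivity)
  have n1 := sq_nonneg (u^2 + v^2 + v*w)
  have n2 := sq_nonneg (w^2 - γ*(x^2 + y^2 + z^2))
  have n3 := sq_nonneg (w*x - y*z)
  have n4 := sq_nonneg (w*y - z*x)
  have n5 := sq_nonneg (w*z - x*y)
  have e1 : u^2 + v^2 + v*w = 0 := by
    have : (u^2 + v^2 + v*w)^2 = 0 := by linarith
    exact sq_eq_zero_iff.mp this
  have e2 : w^2 - γ*(x^2 + y^2 + z^2) = 0 := by
    have : (w^2 - γ*(x^2 + y^2 + z^2))^2 = 0 := by linarith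
    exact sq_eq_zero_iff.mp this
  have e3 : w*x - y*z = 0 := by
    have : (w*x - y*z)^2 = 0 := by linarith
    exact sq_eq_zero_iff.mp this
  have e4 : w*y - z*x = 0 := by
    have : (w*y - z*x)^2 = 0 := by linarith
    exact sq_eq_zero_iff.mp this
  have e5 : w*z - x*y = 0 := by
    have : (w*z - x*y)^2 = 0 := by linarith
    exact sq_eq_zero_iff.mp this
  rcases eq_or_ne w 0 with hw | hw
  · -- w = 0 : everything vanishes
    subst hw
    have hs : x^2 + y^2 + z^2 = 0 := by
      have hγ : γ ≠ 0 := ne_of_gt hγ0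
      have : γ * (x^2 + y^2 + z^2) = 0 := by linarith [e2]
      exact (mul_eq_zero.mp this).resolve_left hγ
    have hx : x = 0 := by
      have : x^2 = 0 := by linarith [sq_nonneg x, sq_nonneg y, sq_nonneg z]
      exact sq_eq_zero_iff.mp this
    have hy : y = 0 := by
      have : y^2 = 0 := by linarith [sq_nonneg x, sq_nonneg y, sq_nonneg z]
      exact sq_eq_zero_iff.mp this
    have hz : z = 0 := by
      have : z^2 = 0 := by linarith [sq_nonneg x, sq_nonneg y, sq_nonneg z]
      exact sq_eq_zero_iff.mp this
    have e1' : u^2 + v^2 = 0 := by linarith [mul_zero v]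
    have hu : u = 0 := by
      have : u^2 = 0 := by linarith [sq_nonneg u, sq_nonneg v]
      exact sq_eq_zero_iff.mp this
    have hv : v = 0 := by
      have : v^2 = 0 := by linarith [sq_nonneg u, sq_nonneg v]
      exact sq_eq_zero_iff.mp this
    exact h ⟨hu, hv, rfl, hx, hy, hz⟩
  · -- w ≠ 0 : derive contradiction
    have h1 : w * (w^2 - 3*γ*x^2) = 0 := by
      linear_combination w*e2 + γ*(y*e4 + z*e5 - 2*x*e3)
    have h2 : w * (w^2 - 3*γ*y^2) = 0 := by
      linear_combination w*e2 + γ*(x*e3 + z*e5 - 2*y*e4)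
    have h3 : w * (w^2 - 3*γ*z^2) = 0 := by
      linear_combination w*e2 + γ*(x*e3 + y*e4 - 2*z*e5)
    have hx2 : w^2 = 3*γ*x^2 := by
      have := (mul_eq_zero.mp h1).resolve_left hw; linarith
    have hy2 : w^2 = 3*γ*y^2 := by
      have := (mul_eq_zero.mp h2).resolve_left hw; linarith
    have hz2 : w^2 = 3*γ*z^2 := by
      have := (mul_eq_zero.mp h3).resolve_left hw; linarith
    have key : (w*x)^2 = (y*z)^2 := by
      have hwx : w*x = y*z := by linarith
      rw [hwx]
    have hww : w^4 = 9*γ^2*(y^2*z^2) := by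
      linear_combination w^2*hy2 + 3*γ*y^2*hz2
    have hww2 : w^4 = 9*γ^2*x^4 := by
      linear_combination (w^2 + 3*γ*x^2)*hx2
    have hx4 : 9*γ^2*(1 - 3*γ)*x^4 = 0 := by
      linear_combination hww - hww2 - 9*γ^2*key + 9*γ^2*x^2*hx2
    have hcoef : (0:ℝ) < 9*γ^2*(1 - 3*γ) := by
      have h3γ : 1 - 3*γ > 0 := by linarith
      positivity
    have hx0 : x = 0 := by
      have hx4' : x^4 = 0 := by
        rcases mul_eq_zero.mp hx4 with hc | hx4'
        · exact absurd hc (ne_of_gt hcoef)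
        · exact hx4'
      exact pow_eq_zero_iff (by norm_num : (4:ℕ) ≠ 0) |>.mp hx4'
    have : w^2 = 0 := by rw [hx0] at hx2; linarith [hx2]
    exact hw (pow_eq_zero_iff (by norm_num : (2:ℕ) ≠ 0) |>.mp this)
end

section
/- For a real parameter ρ, the three cubic forms ρ^2x^3 + ρxy^2 - (1/2)xz^2, ρ^2y^3 + ρyz^2 - (1/2)yx^2, ρ^2z^3 + ρzx^2 - (1/2)zy^2 (i.e. x(ρ^2x^2 + ρy^2 - z^2/2), y(ρ^2y^2 + ρz^2 - x^2/2), z(ρ^2z^2 + ρx^2 - y^2/2)) have a common nontrivial real root if and only if ρ = 0 or ρ^3 = -1/2 or ρ^3 = -(5+3√3)/4 or ρ^3 = (-5+3√3)/4. -/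
lemma cube_inj {a b : ℝ} (h : a^3 = b^3) : a = b :=
  (Odd.strictMono_pow (R := ℝ) (n := 3) (by decide)).injective h

theorem cubics_common_real_root_iff (ρ : ℝ) :
    (∃ x y z : ℝ, ¬ (x = 0 ∧ y = 0 ∧ z = 0) ∧
      x*(ρ^2*x^2 + ρ*y^2 - z^2/2) = 0 ∧
      y*(ρ^2*y^2 + ρ*z^2 - x^2/2) = 0 ∧
      z*(ρ^2*z^2 + ρ*x^2 - y^2/2) = 0) ↔
    (ρ = 0 ∨ ρ^3 = -(1/2) ∨ ρ^3 = -((5 + 3*Real.sqrt 3)/4) ∨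
      ρ^3 = (-5 + 3*Real.sqrt 3)/4) := by
  have hs : Real.sqrt 3 ^ 2 = 3 := Real.sq_sqrt (by norm_num)
  set s := Real.sqrt 3 with hsdef
  constructor
  · rintro ⟨x, y, z, hnt, h1, h2, h3⟩
    by_cases hρ : ρ = 0
    · exact Or.inl hρ
    right
    by_cases hx : x = 0 <;> by_cases hy : y = 0 <;> by_cases hz : z = 0
    · exact absurd ⟨hx, hy, hz⟩ hnt
    -- x = 0, y = 0, z ≠ 0
    · left
      have hC : ρ^2*z^2 + ρ*x^2 - y^2/2 = 0 := by
        rcases mul_eq_zero.mp h3 with h | h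
        · exact absurd h hz
        · exact h
      subst hx; subst hy
      exfalso
      have : ρ^2 * z^2 = 0 := by linarith [hC]
      rcases mul_eq_zero.mp this with h | h
      · exact hρ (pow_eq_zero_iff (by norm_num) |>.mp h)
      · exact hz (pow_eq_zero_iff (by norm_num) |>.mp h)
    -- x = 0, y ≠ 0, z = 0
    · left
      have hB : ρ^2*y^2 + ρ*z^2 - x^2/2 = 0 := by
        rcases mul_eq_zero.mp h2 with h | h
        · exact absurd h hy
        · exact h
      subst hx; subst hz
      exfalso
      have : ρ^2 * y^2 = 0 := by linarith [hB]
      rcases mul_eq_zero.mp this with h | h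
      · exact hρ (pow_eq_zero_iff (by norm_num) |>.mp h)
      · exact hy (pow_eq_zero_iff (by norm_num) |>.mp h)
    -- x = 0, y ≠ 0, z ≠ 0 : ρ³ = -1/2
    · left
      have hB : ρ^2*y^2 + ρ*z^2 - x^2/2 = 0 := by
        rcases mul_eq_zero.mp h2 with h | h
        · exact absurd h hy
        · exact h
      have hC : ρ^2*z^2 + ρ*x^2 - y^2/2 = 0 := by
        rcases mul_eq_zero.mp h3 with h | h
        · exact absurd h hz
        · exact h
      subst hx
      have key : ρ * z^2 * (2*ρ^3 + 1) = 0 := by linear_combination hB + 2*ρ^2*hC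
      rcases mul_eq_zero.mp key with h | h
      · rcases mul_eq_zero.mp h with h' | h'
        · exact absurd h' hρ
        · exact absurd (pow_eq_zero_iff (by norm_num) |>.mp h') hz
      · linarith
    -- x ≠ 0, y = 0, z = 0
    · left
      have hA : ρ^2*x^2 + ρ*y^2 - z^2/2 = 0 := by
        rcases mul_eq_zero.mp h1 with h | h
        · exact absurd h hx
        · exact h
      subst hy; subst hz
      exfalso
      have : ρ^2 * x^2 = 0 := by linarith [hA]
      rcases mul_eq_zero.mp this with h | h
      · exact hρ (pow_eq_zero_iff (by norm_num) |>.mp h)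
      · exact hx (pow_eq_zero_iff (by norm_num) |>.mp h)
    -- x ≠ 0, y = 0, z ≠ 0 : ρ³ = -1/2
    · left
      have hA : ρ^2*x^2 + ρ*y^2 - z^2/2 = 0 := by
        rcases mul_eq_zero.mp h1 with h | h
        · exact absurd h hx
        · exact h
      have hC : ρ^2*z^2 + ρ*x^2 - y^2/2 = 0 := by
        rcases mul_eq_zero.mp h3 with h | h
        · exact absurd h hz
        · exact h
      subst hy
      have key : ρ * x^2 * (2*ρ^3 + 1) = 0 := by linear_combination hC + 2*ρ^2*hA
      rcases mul_eq_zero.mp key with h | h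
      · rcases mul_eq_zero.mp h with h' | h'
        · exact absurd h' hρ
        · exact absurd (pow_eq_zero_iff (by norm_num) |>.mp h') hx
      · linarith
    -- x ≠ 0, y ≠ 0, z = 0 : ρ³ = -1/2
    · left
      have hA : ρ^2*x^2 + ρ*y^2 - z^2/2 = 0 := by
        rcases mul_eq_zero.mp h1 with h | h
        · exact absurd h hx
        · exact h
      have hB : ρ^2*y^2 + ρ*z^2 - x^2/2 = 0 := by
        rcases mul_eq_zero.mp h2 with h | h
        · exact absurd h hy
        · exact h
      subst hz
      have key : ρ * y^2 * (2*ρ^3 + 1) = 0 := by linear_combination hA + 2*ρ^2*hB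
      rcases mul_eq_zero.mp key with h | h
      · rcases mul_eq_zero.mp h with h' | h'
        · exact absurd h' hρ
        · exact absurd (pow_eq_zero_iff (by norm_num) |>.mp h') hy
      · linarith
    -- all nonzero : ρ² + ρ - 1/2 = 0
    · right
      have hA : ρ^2*x^2 + ρ*y^2 - z^2/2 = 0 := by
        rcases mul_eq_zero.mp h1 with h | h
        · exact absurd h hx
        · exact h
      have hB : ρ^2*y^2 + ρ*z^2 - x^2/2 = 0 := by
        rcases mul_eq_zero.mp h2 with h | h
        · exact absurd h hy
        · exact h
      have hC : ρ^2*z^2 + ρ*x^2 - y^2/2 = 0 := by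
        rcases mul_eq_zero.mp h3 with h | h
        · exact absurd h hz
        · exact h
      have hsum : (ρ^2 + ρ - 1/2) * (x^2 + y^2 + z^2) = 0 := by
        linear_combination hA + hB + hC
      have hpos : 0 < x^2 + y^2 + z^2 := by positivity
      have hq : ρ^2 + ρ - 1/2 = 0 := by
        rcases mul_eq_zero.mp hsum with h | h
        · exact h
        · linarith
      have hfac : (2*ρ + 1 - s) * (2*ρ + 1 + s) = 0 := by
        linear_combination 4*hq - hs
      rcases mul_eq_zero.mp hfac with h | h
      · right
        have hρv : ρ = (s - 1)/2 := by linarith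
        rw [hρv]
        linear_combination ((s - 3)/8) * hs
      · left
        have hρv : ρ = (-s - 1)/2 := by linarith
        rw [hρv]
        linear_combination (-(s + 3)/8) * hs
  · rintro (h0 | h | h | h)
    · exact ⟨0, 0, 1, by simp, by norm_num, by norm_num, by rw [h0]; norm_num⟩
    · refine ⟨Real.sqrt (2*ρ^2), 1, 0, by simp, ?_, ?_, by norm_num⟩
      · have hx2 : Real.sqrt (2*ρ^2) ^ 2 = 2*ρ^2 := Real.sq_sqrt (by positivity)
        rw [hx2]
        linear_combination 2 * Real.sqrt (2*ρ^2) * ρ * h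
      · have hx2 : Real.sqrt (2*ρ^2) ^ 2 = 2*ρ^2 := Real.sq_sqrt (by positivity)
        rw [hx2]; ring
    · have hc3 : ((-s - 1)/2)^3 = -((5 + 3*s)/4) := by
        linear_combination (-(s + 3)/8) * hs
      have hρv : ρ = (-s - 1)/2 := cube_inj (h.trans hc3.symm)
      refine ⟨1, 1, 1, by norm_num, ?_, ?_, ?_⟩ <;>
      · rw [hρv]; linear_combination (1/4 : ℝ) * hs
    · have hc3 : ((s - 1)/2)^3 = (-5 + 3*s)/4 := by
        linear_combination ((s - 3)/8) * hs
      have hρv : ρ = (s - 1)/2 := cube_inj (h.trans hc3.symm)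
      refine ⟨1, 1, 1, by norm_num, ?_, ?_, ?_⟩ <;>
      · rw [hρv]; linear_combination (1/4 : ℝ) * hs
end

section
/- With η0 = (1+√5)^{-3} and ρ = (1+√5)^{-1}, the identity s_{η0}(x,y,z) = (1+√5)·f_ρ(x,y,z) holds, where s_{η0}(x,y,z) = x^4y^2 + y^4z^2 + z^4x^2 - 3x^2y^2z^2 + η0(x^6+y^6+z^6) and f_ρ(x,y,z) = x^2(ρ^2x^2 + ρy^2 - z^2/2)^2 + y^2(ρ^2y^2 + ρz^2 - x^2/2)^2 + z^2(ρ^2z^2 + ρx^2 - y^2/2)^2. -/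
theorem s_eta0_eq_f_rho (x y z : ℝ) :
    let η0 : ℝ := (1 + Real.sqrt 5)⁻¹ ^ 3
    let ρ : ℝ := (1 + Real.sqrt 5)⁻¹
    x^4*y^2 + y^4*z^2 + z^4*x^2 - 3*x^2*y^2*z^2 + η0*(x^6 + y^6 + z^6)
      = (1 + Real.sqrt 5) *
        (x^2*(ρ^2*x^2 + ρ*y^2 - z^2/2)^2 + y^2*(ρ^2*y^2 + ρ*z^2 - x^2/2)^2
          + z^2*(ρ^2*z^2 + ρ*x^2 - y^2/2)^2) := by
  intro η0 ρ
  have hs : Real.sqrt 5 ^ 2 = 5 := Real.sq_sqrt (by norm_num)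
  have hpos : (0:ℝ) < Real.sqrt 5 := Real.sqrt_pos.mpr (by norm_num)
  have hne : (1 + Real.sqrt 5) ≠ 0 := by positivity
  have hrho : ρ = (Real.sqrt 5 - 1)/4 := by
    rw [show ρ = (1 + Real.sqrt 5)⁻¹ from rfl, inv_eq_iff_eq_inv, eq_comm,
      inv_eq_iff_eq_inv]
    · field_simp
      nlinarith [hs]
  have heta : η0 = ρ ^ 3 := rfl
  rw [heta, hrho]
  set t := Real.sqrt 5 with ht
  linear_combination ((1/256)*z^6 + (-3/256)*z^6*t + (3/256)*z^6*t^2 + (-1/256)*z^6*t^3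
    + (-5/32)*y^4*z^2 + (1/16)*y^4*z^2*t + (-1/32)*y^4*z^2*t^2 + (1/256)*y^6
    + (-3/256)*y^6*t + (3/256)*y^6*t^2 + (-1/256)*y^6*t^3 + (-5/32)*x^2*z^4
    + (1/16)*x^2*z^4*t + (-1/32)*x^2*z^4*t^2 + (3/4)*x^2*y^2*z^2 + (-5/32)*x^4*y^2
    + (1/16)*x^4*y^2*t + (-1/32)*x^4*y^2*t^2 + (1/256)*x^6 + (-3/256)*x^6*t
    + (3/256)*x^6*t^2 + (-1/256)*x^6*t^3) * hs
end

section
/- The sextic form g(w,x,y,z) = (w^3 + wx^2 - wy^2 - (1/2)wz^2)^2 + (xw^2 + x^3 - xy^2 - (1/2)xz^2)^2 + (y^3 - yz^2 - (1/2)yw^2 - (1/2)yx^2)^2 + (z^3 - zw^2 - zx^2 - (1/2)zy^2)^2 is positive definite on R^4, and the four cubics being squared all vanish at the nonzero complex point (w,x,y,z) = (1, i, 0, 0). -/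
set_option maxHeartbeats 1000000 in
open Complex in
theorem sextic_noncoercive_example :
    (∀ w x y z : ℝ, ¬ (w = 0 ∧ x = 0 ∧ y = 0 ∧ z = 0) →
      0 < (w^3 + w*x^2 - w*y^2 - (1/2)*w*z^2)^2 + (x*w^2 + x^3 - x*y^2 - (1/2)*x*z^2)^2
        + (y^3 - y*z^2 - (1/2)*y*w^2 - (1/2)*y*x^2)^2
        + (z^3 - z*w^2 - z*x^2 - (1/2)*z*y^2)^2) ∧
    (∀ w x y z : ℂ, w = 1 → x = I → y = 0 → z = 0 →
      w^3 + w*x^2 - w*y^2 - (1/2 : ℂ)*w*z^2 = 0 ∧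
      x*w^2 + x^3 - x*y^2 - (1/2 : ℂ)*x*z^2 = 0 ∧
      y^3 - y*z^2 - (1/2 : ℂ)*y*w^2 - (1/2 : ℂ)*y*x^2 = 0 ∧
      z^3 - z*w^2 - z*x^2 - (1/2 : ℂ)*z*y^2 = 0) := by
  constructor
  · intro w x y z h
    by_contra hS
    push_neg at hS
    have q1 := sq_nonneg (w^3 + w*x^2 - w*y^2 - (1/2)*w*z^2)
    have q2 := sq_nonneg (x*w^2 + x^3 - x*y^2 - (1/2)*x*z^2)
    have q3 := sq_nonneg (y^3 - y*z^2 - (1/2)*y*w^2 - (1/2)*y*x^2)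
    have q4 := sq_nonneg (z^3 - z*w^2 - z*x^2 - (1/2)*z*y^2)
    have s1 : (w^3 + w*x^2 - w*y^2 - (1/2)*w*z^2)^2 = 0 := by linarith
    have s2 : (x*w^2 + x^3 - x*y^2 - (1/2)*x*z^2)^2 = 0 := by linarith
    have s3 : (y^3 - y*z^2 - (1/2)*y*w^2 - (1/2)*y*x^2)^2 = 0 := by linarith
    have s4 : (z^3 - z*w^2 - z*x^2 - (1/2)*z*y^2)^2 = 0 := by linarith
    have e1 : w^3 + w*x^2 - w*y^2 - (1/2)*w*z^2 = 0 := pow_eq_zero_iff two_ne_zero |>.mp s1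
    have e2 : x*w^2 + x^3 - x*y^2 - (1/2)*x*z^2 = 0 := pow_eq_zero_iff two_ne_zero |>.mp s2
    have e3 : y^3 - y*z^2 - (1/2)*y*w^2 - (1/2)*y*x^2 = 0 := pow_eq_zero_iff two_ne_zero |>.mp s3
    have e4 : z^3 - z*w^2 - z*x^2 - (1/2)*z*y^2 = 0 := pow_eq_zero_iff two_ne_zero |>.mp s4
    clear hS q1 q2 q3 q4 s1 s2 s3 s4
    have hall : w^2 + x^2 + y^2 + z^2 = 0 := by
      have hsA : (w^2 + x^2) * (w^2 + x^2 - y^2 - z^2/2) = 0 := by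
        linear_combination w*e1 + x*e2
      have hyB : y * (y^2 - z^2 - w^2/2 - x^2/2) = 0 := by linear_combination e3
      have hzC : z * (z^2 - w^2 - x^2 - y^2/2) = 0 := by linear_combination e4
      rcases mul_eq_zero.mp hsA with hs | hA
      · have k1 : y^4 + 2*z^4 - 2*y^2*z^2 = 0 := by
          linear_combination y*e3 + 2*z*e4 + (y^2/2 + 2*z^2)*hs
        have hz4 : (z^2)^2 = 0 := by nlinarith [sq_nonneg (y^2 - z^2)]
        have hz2 : z^2 = 0 := pow_eq_zero_iff two_ne_zero |>.mp hz4
        have hy4 : (y^2)^2 = 0 := by linear_combination k1 + (2*y^2 - 2*z^2)*hz2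
        have hy2 : y^2 = 0 := pow_eq_zero_iff two_ne_zero |>.mp hy4
        linarith [sq_nonneg w, sq_nonneg x]
      · rcases mul_eq_zero.mp hyB with hy | hB
        · rcases mul_eq_zero.mp hzC with hz | hC
          · rw [hy, hz] at hA ⊢; linarith
          · rw [hy] at hA hC ⊢
            linarith [sq_nonneg w, sq_nonneg x, sq_nonneg z]
        · rcases mul_eq_zero.mp hzC with hz | hC
          · rw [hz] at hA hB ⊢
            linarith [sq_nonneg w, sq_nonneg x, sq_nonneg y]
          · linarith
    have hw2 : w^2 = 0 := by linarith [sq_nonneg w, sq_nonneg x, sq_nonneg y, sq_nonneg z]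
    have hx2 : x^2 = 0 := by linarith [sq_nonneg w, sq_nonneg x, sq_nonneg y, sq_nonneg z]
    have hy2 : y^2 = 0 := by linarith [sq_nonneg w, sq_nonneg x, sq_nonneg y, sq_nonneg z]
    have hz2 : z^2 = 0 := by linarith [sq_nonneg w, sq_nonneg x, sq_nonneg y, sq_nonneg z]
    have hw : w = 0 := pow_eq_zero_iff two_ne_zero |>.mp hw2
    have hx : x = 0 := pow_eq_zero_iff two_ne_zero |>.mp hx2
    have hy : y = 0 := pow_eq_zero_iff two_ne_zero |>.mp hy2
    have hz : z = 0 := pow_eq_zero_iff two_ne_zero |>.mp hz2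
    exact h ⟨hw, hx, hy, hz⟩
  · intro w x y z hw hx hy hz
    subst hw hx hy hz
    exact ⟨by linear_combination Complex.I_sq, by linear_combination I*Complex.I_sq,
      by ring, by ring⟩
end
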